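/- arXiv:2208.11330 — 3 statements merged into one kernel-verified Lean document; each statement's English description precedes it below -/
import Mathlib

section
/- Let f ∈ C¹([0,∞)) ∩ C²((0,∞)) satisfy f(0)=0, f,f',f''>0 on (0,∞), and F(u)=∫_u^∞ ds/f(s) < ∞ for all u>0. If the limit q := lim_{s→0⁺} f'(s)F(s) exists, then q ≥ 1. -/
open MeasureTheory Set Filter Topology

/-!
A convex `f` with `f 0 = 0` satisfies `f s ≤ s f'(s)`, so `f F = (f / f') (f' F) → 0` as
`s → 0⁺`. The nonnegative function `f F` has derivative `f' F - 1 → q - 1`; a nonnegative function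
tending to `0` at `0⁺` cannot have a derivative with negative limit there, so `q ≥ 1`.
-/

theorem hasDerivAt_integral_Ioi {E : Type*} [NormedAddCommGroup E] [NormedSpace ℝ E]
    [CompleteSpace E] {g : ℝ → E} {a u : ℝ} (hau : a < u) (hg : IntegrableOn g (Ioi a))
    (hgu : ContinuousAt g u) :
    HasDerivAt (fun x => ∫ s in Ioi x, g s) (-g u) u := by
  have hsplit : (fun x => (∫ s in Ioi a, g s) - ∫ s in a..x, g s) =ᶠ[𝓝 u]
      fun x => ∫ s in Ioi x, g s := by
    filter_upwards [Ioi_mem_nhds hau] with x hx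
    rw [← intervalIntegral.integral_Ioi_sub_Ioi hg hx.le, sub_sub_cancel]
  refine (HasDerivAt.const_sub _ ?_).congr_of_eventuallyEq hsplit.symm
  exact intervalIntegral.integral_hasDerivAt_right
    ((intervalIntegrable_iff_integrableOn_Ioc_of_le hau.le).2 (hg.mono_set Ioc_subset_Ioi_self))
    (AEStronglyMeasurable.stronglyMeasurableAtFilter_of_mem hg.aestronglyMeasurable
      (Ioi_mem_nhds hau)) hgu

theorem ConvexOn.le_mul_deriv {f : ℝ → ℝ} (hf : ConvexOn ℝ (Ici 0) f) (hf0 : f 0 = 0) {x : ℝ}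
    (hx : 0 < x) (hfx : DifferentiableAt ℝ f x) : f x ≤ x * deriv f x := by
  have := hf.slope_le_deriv self_mem_Ici hx.le hx hfx
  rwa [slope_def_field, hf0, sub_zero, sub_zero, div_le_iff₀' hx] at this

theorem ConvexOn.tendsto_mul_nhdsGT_zero {f F : ℝ → ℝ} {q : ℝ} (hf : ConvexOn ℝ (Ici 0) f)
    (hf0 : f 0 = 0) (hf_nonneg : ∀ u > (0:ℝ), 0 ≤ f u) (hf' : ∀ u > (0:ℝ), 0 < deriv f u)
    (hq : Tendsto (fun s => deriv f s * F s) (𝓝[>] 0) (𝓝 q)) :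
    Tendsto (fun s => f s * F s) (𝓝[>] 0) (𝓝 0) := by
  have hratio : Tendsto (fun s => f s / deriv f s) (𝓝[>] 0) (𝓝 0) := by
    refine squeeze_zero' (eventually_nhdsWithin_of_forall fun s hs =>
      div_nonneg (hf_nonneg s hs) (hf' s hs).le) (eventually_nhdsWithin_of_forall
      fun s hs => (div_le_iff₀ (hf' s hs)).2 ?_) (tendsto_nhdsWithin_of_tendsto_nhds tendsto_id)
    exact hf.le_mul_deriv hf0 hs (differentiableAt_of_deriv_ne_zero (hf' s hs).ne')
  refine (zero_mul q ▸ hratio.mul hq).congr' (eventually_nhdsWithin_of_forall fun s hs => ?_)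
  field_simp [(hf' s hs).ne']

theorem nonneg_of_tendsto_deriv_nhdsGT {G G' : ℝ → ℝ} {a L : ℝ}
    (hG : Tendsto G (𝓝[>] a) (𝓝 0)) (hG_nonneg : ∀ᶠ x in 𝓝[>] a, 0 ≤ G x)
    (hG_deriv : ∀ᶠ x in 𝓝[>] a, HasDerivAt G (G' x) x)
    (hG' : Tendsto G' (𝓝[>] a) (𝓝 L)) : 0 ≤ L := by
  by_contra! hL
  obtain ⟨b, hab, hb⟩ := (nhdsGT_basis a).eventually_iff.1
    ((hG_nonneg.and hG_deriv).and (hG'.eventually_lt_const (by linarith : L < L / 2)))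
  set y := (a + b) / 2
  have hy : y ∈ Ioo a b := ⟨by simp only [y]; linarith, by simp only [y]; linarith⟩
  have hmvt : ∀ s ∈ Ioo a y, G y ≤ G s + L / 2 * (y - s) := fun s hs => by
    have := (convex_Ioo a b).image_sub_le_mul_sub_of_deriv_le
      (fun x hx => (hb hx).1.2.continuousAt.continuousWithinAt)
      (fun x hx => (hb (interior_subset hx)).1.2.differentiableAt.differentiableWithinAt)
      (fun x hx => ((hb (interior_subset hx)).1.2.deriv).symm ▸ (hb (interior_subset hx)).2.le)
      s ⟨hs.1, hs.2.trans hy.2⟩ y hy hs.2.le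
    linarith
  have hlim : Tendsto (fun s => G s + L / 2 * (y - s)) (𝓝[>] a) (𝓝 (0 + L / 2 * (y - a))) :=
    hG.add (((continuous_const.sub continuous_id).tendsto a).mono_left nhdsWithin_le_nhds
      |>.const_mul _)
  have := ge_of_tendsto hlim (eventually_of_mem (Ioo_mem_nhdsGT hy.1) hmvt)
  nlinarith [(hb hy).1.1, hy.1]

theorem limit_fprime_F_ge_one_general
    (f : ℝ → ℝ)
    (hf1 : ContDiffOn ℝ 1 f (Ici 0))
    (hf0 : f 0 = 0)
    (hfpos : ∀ u > (0:ℝ), 0 < f u)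
    (hf'pos : ∀ u > (0:ℝ), 0 < deriv f u)
    (hf''pos : ∀ u > (0:ℝ), 0 < deriv (deriv f) u)
    (hint : ∀ u > (0:ℝ), IntegrableOn (fun s => 1 / f s) (Ioi u))
    (F : ℝ → ℝ) (hF : ∀ u > (0:ℝ), F u = ∫ s in Ioi u, 1 / f s)
    (q : ℝ)
    (hq : Tendsto (fun s => deriv f s * F s) (𝓝[>] 0) (𝓝 q)) :
    1 ≤ q := by
  have hf_diff : ∀ u > (0:ℝ), DifferentiableAt ℝ f u := fun u hu =>
    differentiableAt_of_deriv_ne_zero (hf'pos u hu).ne'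
  have hf_convex : ConvexOn ℝ (Ici 0) f := by
    refine convexOn_of_deriv2_nonneg (convex_Ici 0) hf1.continuousOn ?_ ?_ ?_ <;>
      rw [interior_Ici]
    · exact fun u hu => (hf_diff u hu).differentiableWithinAt
    · exact fun u hu =>
        (differentiableAt_of_deriv_ne_zero (hf''pos u hu).ne').differentiableWithinAt
    · exact fun u hu => (hf''pos u hu).le
  have hF_deriv : ∀ u > (0:ℝ), HasDerivAt F (-(1 / f u)) u := fun u hu =>
    (hasDerivAt_integral_Ioi (half_lt_self hu) (hint _ (half_pos hu))
      (continuousAt_const.div (hf_diff u hu).continuousAt (hfpos u hu).ne')).congr_of_eventuallyEq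
      (eventually_of_mem (Ioi_mem_nhds hu) hF)
  have hfF_deriv : ∀ u > (0:ℝ), HasDerivAt (fun s => f s * F s) (deriv f u * F u - 1) u :=
    fun u hu => by
      have h := (hf_diff u hu).hasDerivAt.mul (hF_deriv u hu)
      rwa [mul_neg, mul_one_div_cancel (hfpos u hu).ne', ← sub_eq_add_neg] at h
  have hF_nonneg : ∀ u > (0:ℝ), 0 ≤ f u * F u := fun u hu => by
    rw [hF u hu]
    exact mul_nonneg (hfpos u hu).le
      (setIntegral_nonneg measurableSet_Ioi fun s hs => (one_div_pos.2 (hfpos s (hu.trans hs))).le)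
  have hfF := hf_convex.tendsto_mul_nhdsGT_zero hf0 (fun u hu => (hfpos u hu).le) hf'pos hq
  linarith [nonneg_of_tendsto_deriv_nhdsGT hfF (eventually_nhdsWithin_of_forall hF_nonneg)
    (eventually_nhdsWithin_of_forall hfF_deriv) (hq.sub_const 1)]

theorem limit_fprime_F_ge_one
    (f : ℝ → ℝ)
    (hf1 : ContDiffOn ℝ 1 f (Ici 0)) (hf2 : ContDiffOn ℝ 2 f (Ioi 0))
    (hf0 : f 0 = 0)
    (hfpos : ∀ u > (0:ℝ), 0 < f u)
    (hf'pos : ∀ u > (0:ℝ), 0 < deriv f u)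
    (hf''pos : ∀ u > (0:ℝ), 0 < deriv (deriv f) u)
    (hint : ∀ u > (0:ℝ), IntegrableOn (fun s => 1 / f s) (Ioi u))
    (F : ℝ → ℝ) (hF : ∀ u > (0:ℝ), F u = ∫ s in Ioi u, 1 / f s)
    (q : ℝ)
    (hq : Tendsto (fun s => deriv f s * F s) (𝓝[>] 0) (𝓝 q)) :
    1 ≤ q :=
  limit_fprime_F_ge_one_general f hf1 hf0 hfpos hf'pos hf''pos hint F hF q hq
end

section
/- Suppose F : (0, ε₀] → (0,∞) is C² with F' < 0, F'' > 0, and suppose there is δ ∈ (0,1) such that F''(s)F(s)/(F'(s))² ≤ 1 - δ for all s ∈ (0, ε₀]. Then limsup_{s→0⁺} F(s) < ∞. -/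
/-!
Since `(F ^ δ)'' = δ F ^ (δ - 2) (F F'' - (1 - δ) F' ^ 2)`, the key estimate says exactly
that `F ^ δ` is concave on `(0, ε₀]`. A concave function lies below its tangent at `ε₀`, so
`F ^ δ`, and with it `F`, is bounded above on `(0, ε₀]`.
-/

open MeasureTheory Set Filter Topology

theorem concaveOn_rpow_of_mul_le {D : Set ℝ} (hD : Convex ℝ D) {δ : ℝ} (hδ : 0 ≤ δ)
    {F F' F'' : ℝ → ℝ} (hF : ∀ s ∈ D, 0 < F s)
    (hF' : ∀ s ∈ D, HasDerivAt F (F' s) s) (hF'' : ∀ s ∈ D, HasDerivAt F' (F'' s) s)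
    (hle : ∀ s ∈ D, F'' s * F s ≤ (1 - δ) * F' s ^ 2) :
    ConcaveOn ℝ D (fun s => F s ^ δ) := by
  have hderiv (s : ℝ) (hs : s ∈ D) :
      HasDerivAt (fun s => F s ^ δ) (F' s * δ * F s ^ (δ - 1)) s :=
    (hF' s hs).rpow_const (Or.inl (hF s hs).ne')
  have hderiv2 (s : ℝ) (hs : s ∈ D) : HasDerivAt (fun s => F' s * δ * F s ^ (δ - 1))
      (δ * F s ^ (δ - 2) * (F'' s * F s - (1 - δ) * F' s ^ 2)) s := by
    have hpow : F s ^ (δ - 1) = F s ^ (δ - 2) * F s := by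
      rw [← Real.rpow_add_one (hF s hs).ne']
      ring_nf
    refine (((hF'' s hs).mul_const δ).mul
      ((hF' s hs).rpow_const (Or.inl (hF s hs).ne'))).congr_deriv ?_
    rw [show δ - 1 - 1 = δ - 2 by ring, hpow]
    ring
  refine concaveOn_of_hasDerivWithinAt2_nonpos hD
    (fun s hs => (hderiv s hs).continuousAt.continuousWithinAt)
    (fun s hs => (hderiv s (interior_subset hs)).hasDerivWithinAt)
    (fun s hs => (hderiv2 s (interior_subset hs)).hasDerivWithinAt) fun s hs => ?_
  have hs := interior_subset hs
  exact mul_nonpos_of_nonneg_of_nonpos (mul_nonneg hδ (Real.rpow_nonneg (hF s hs).le _))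
    (by linarith [hle s hs])

theorem ConcaveOn.bddAbove_image_Ioc {a b f' : ℝ} {f : ℝ → ℝ}
    (hf : ConcaveOn ℝ (Ioc a b) f) (hderiv : HasDerivAt f f' b) : BddAbove (f '' Ioc a b) := by
  refine ⟨f b + |f'| * (b - a), ?_⟩
  rintro _ ⟨s, hs, rfl⟩
  rcases hs.2.eq_or_lt with rfl | hsb
  · nlinarith [abs_nonneg f', hs.1]
  have hslope := hf.le_slope_of_hasDerivAt hs ⟨hs.1.trans hsb, le_rfl⟩ hsb hderiv
  rw [slope_def_field, le_div_iff₀ (sub_pos.2 hsb)] at hslope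
  nlinarith [neg_abs_le f', abs_nonneg f', hs.1]

theorem limsup_F_finite_of_key_estimate_general
    (ε₀ δ : ℝ) (hε₀ : 0 < ε₀) (hδ : δ ∈ Ioo (0:ℝ) 1)
    (F F' F'' : ℝ → ℝ)
    (hd1 : ∀ s ∈ Ioc (0:ℝ) ε₀, HasDerivAt F (F' s) s)
    (hd2 : ∀ s ∈ Ioc (0:ℝ) ε₀, HasDerivAt F' (F'' s) s)
    (hFpos : ∀ s ∈ Ioc (0:ℝ) ε₀, 0 < F s)
    (hF'neg : ∀ s ∈ Ioc (0:ℝ) ε₀, F' s < 0)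
    (hkey : ∀ s ∈ Ioc (0:ℝ) ε₀, F'' s * F s / (F' s) ^ 2 ≤ 1 - δ) :
    IsBoundedUnder (· ≤ ·) (𝓝[>] 0) F := by
  have hconcave : ConcaveOn ℝ (Ioc 0 ε₀) (fun s => F s ^ δ) :=
    concaveOn_rpow_of_mul_le (convex_Ioc 0 ε₀) hδ.1.le hFpos hd1 hd2 fun s hs =>
      (div_le_iff₀ (pow_two_pos_of_ne_zero (hF'neg s hs).ne)).1 (hkey s hs)
  have hε₀_mem : ε₀ ∈ Ioc 0 ε₀ := ⟨hε₀, le_rfl⟩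
  obtain ⟨M, hM⟩ := hconcave.bddAbove_image_Ioc
    ((hd1 ε₀ hε₀_mem).rpow_const (Or.inl (hFpos ε₀ hε₀_mem).ne'))
  refine isBoundedUnder_of_eventually_le (a := M ^ δ⁻¹)
    (eventually_of_mem (Ioc_mem_nhdsGT hε₀) fun s hs => ?_)
  have hFM : F s ^ δ ≤ M := hM (mem_image_of_mem _ hs)
  have hM_nonneg : 0 ≤ M := (Real.rpow_nonneg (hFpos s hs).le δ).trans hFM
  exact (Real.le_rpow_inv_iff_of_pos (hFpos s hs).le hM_nonneg hδ.1).2 hFM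

theorem limsup_F_finite_of_key_estimate
    (ε₀ δ : ℝ) (hε₀ : 0 < ε₀) (hδ : δ ∈ Ioo (0:ℝ) 1)
    (F F' F'' : ℝ → ℝ)
    (hd1 : ∀ s ∈ Ioc (0:ℝ) ε₀, HasDerivAt F (F' s) s)
    (hd2 : ∀ s ∈ Ioc (0:ℝ) ε₀, HasDerivAt F' (F'' s) s)
    (hc : ContinuousOn F'' (Ioc (0:ℝ) ε₀))
    (hFpos : ∀ s ∈ Ioc (0:ℝ) ε₀, 0 < F s)
    (hF'neg : ∀ s ∈ Ioc (0:ℝ) ε₀, F' s < 0)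
    (hF''pos : ∀ s ∈ Ioc (0:ℝ) ε₀, 0 < F'' s)
    (hkey : ∀ s ∈ Ioc (0:ℝ) ε₀, F'' s * F s / (F' s) ^ 2 ≤ 1 - δ) :
    IsBoundedUnder (· ≤ ·) (𝓝[>] 0) F :=
  limsup_F_finite_of_key_estimate_general ε₀ δ hε₀ hδ F F' F'' hd1 hd2 hFpos hF'neg hkey
end

section
/- Let f, g be positive C² functions on (0,∞) with F(s) = ∫_s^∞ dη/f(η) and G(s) = ∫_s^∞ dη/g(η) finite, and let φ(s) := F⁻¹(G(s)). Then φ'(s) = f(φ(s))/g(s) > 0 and φ''(s) = [f(φ(s))/(g(s)² F(φ(s)))] · [f'(φ(s))F(φ(s)) - g'(s)G(s)]. In particular, if f'(φ(s))F(φ(s)) ≥ g'(s)G(s) on an interval, then φ is convex there. -/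
/-!
Differentiating `F (φ s) = G s` gives `φ' / f (φ) = 1 / g`, that is `φ' = f (φ) / g`; the inverse
function theorem for the strictly decreasing `F` justifies this. Differentiating the quotient once
more gives `φ'' = f (φ) (f' (φ) - g') / g²`, and multiplying the bracket by `F (φ s) = G s > 0`
puts it in the stated form, whose sign is that of `f' (φ) F (φ) - g' G`.
-/

open MeasureTheory Set Filter Topology

theorem StrictAntiOn.continuousAt_of_image_mem_nhds {α β : Type*} [LinearOrder α]
    [TopologicalSpace α] [OrderTopology α] [LinearOrder β] [TopologicalSpace β] [OrderTopology β]
    [DenselyOrdered β] {f : α → β} {s : Set α} {a : α} (h_anti : StrictAntiOn f s)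
    (hs : s ∈ 𝓝 a) (hfs : f '' s ∈ 𝓝 (f a)) : ContinuousAt f a :=
  StrictMonoOn.continuousAt_of_image_mem_nhds (β := βᵒᵈ) h_anti.dual_right hs hfs

theorem setIntegral_Ioi_pos {h : ℝ → ℝ} {a : ℝ} (hpos : ∀ x > a, 0 < h x)
    (hint : IntegrableOn h (Ioi a)) : 0 < ∫ x in Ioi a, h x := by
  have hsupp : Function.support h ∩ Ioi a = Ioi a :=
    inter_eq_right.2 fun x hx => (hpos x hx).ne'
  rw [setIntegral_pos_iff_support_of_nonneg_ae
    (ae_restrict_of_forall_mem measurableSet_Ioi fun x hx => (hpos x hx).le) hint, hsupp,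
    Real.volume_Ioi]
  exact ENNReal.zero_lt_top

theorem hasDerivAt_integral_Ioi_s12 {h : ℝ → ℝ} {a s : ℝ} (hint : IntegrableOn h (Ioi a))
    (has : a < s) (hcont : ContinuousAt h s) :
    HasDerivAt (fun t => ∫ x in Ioi t, h x) (-h s) s := by
  have hnhds : Ioi a ∈ 𝓝 s := Ioi_mem_nhds has
  have hsplit : ∀ᶠ t in 𝓝 s, ∫ x in Ioi t, h x = (∫ x in Ioi a, h x) - ∫ x in a..t, h x :=
    eventually_of_mem hnhds fun t ht => by
      rw [← intervalIntegral.integral_Ioi_sub_Ioi hint (le_of_lt ht)]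
      exact (sub_sub_cancel _ _).symm
  have hderiv : HasDerivAt (fun t => ∫ x in a..t, h x) (h s) s :=
    intervalIntegral.integral_hasDerivAt_right
      ((intervalIntegrable_iff_integrableOn_Ioc_of_le has.le).2
        (hint.mono_set Ioc_subset_Ioi_self))
      (AEStronglyMeasurable.stronglyMeasurableAtFilter_of_mem hint.aestronglyMeasurable hnhds) hcont
  exact (hderiv.const_sub _).congr_of_eventuallyEq hsplit

theorem hasDerivAt_of_eqOn_integral_Ioi_one_div {k K : ℝ → ℝ} (hk : ContinuousOn k (Ioi 0))
    (hkpos : ∀ s > (0:ℝ), 0 < k s) (hint : ∀ s > (0:ℝ), IntegrableOn (fun η => 1 / k η) (Ioi s))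
    (hK : ∀ s > (0:ℝ), K s = ∫ η in Ioi s, 1 / k η) {s : ℝ} (hs : 0 < s) :
    HasDerivAt K (-(1 / k s)) s := by
  have hcont : ContinuousAt (fun η => 1 / k η) s :=
    continuousAt_const.div (hk.continuousAt (Ioi_mem_nhds hs)) (hkpos s hs).ne'
  refine (hasDerivAt_integral_Ioi_s12 (hint (s / 2) (half_pos hs)) (half_lt_self hs) hcont)
    |>.congr_of_eventuallyEq ?_
  exact eventually_of_mem (Ioi_mem_nhds hs) hK

theorem HasDerivAt.of_invOn_of_strictAntiOn {F Finv : ℝ → ℝ} {U V : Set ℝ} {F' σ : ℝ}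
    (hF : StrictAntiOn F U) (hFmaps : MapsTo F U V) (hFinvmaps : MapsTo Finv V U)
    (hinv : InvOn Finv F U V) (hU : U ∈ 𝓝 (Finv σ)) (hV : V ∈ 𝓝 σ)
    (hder : HasDerivAt F F' (Finv σ)) (hF' : F' ≠ 0) : HasDerivAt Finv F'⁻¹ σ := by
  have hanti : StrictAntiOn Finv V := fun x hx y hy hxy =>
    (hF.lt_iff_gt (hFinvmaps hx) (hFinvmaps hy)).1 (by rwa [hinv.2 hx, hinv.2 hy])
  have himage : Finv '' V ∈ 𝓝 (Finv σ) :=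
    mem_of_superset hU fun u hu => ⟨F u, hFmaps hu, hinv.1 hu⟩
  exact hder.of_local_left_inverse (hanti.continuousAt_of_image_mem_nhds hV himage) hF'
    (eventually_of_mem hV fun y hy => hinv.2 hy)

theorem hasDerivAt_inverse_comp {f g F G Finv : ℝ → ℝ} {s : ℝ}
    (hfpos : ∀ u > (0:ℝ), 0 < f u) (hFd : ∀ u > (0:ℝ), HasDerivAt F (-(1 / f u)) u)
    (hFpos : ∀ u > (0:ℝ), 0 < F u) (hFinv : ∀ σ > (0:ℝ), 0 < Finv σ ∧ F (Finv σ) = σ)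
    (hFinv' : ∀ u > (0:ℝ), Finv (F u) = u) (hGd : HasDerivAt G (-(1 / g s)) s) (hGs : 0 < G s) :
    HasDerivAt (Finv ∘ G) (f (Finv (G s)) / g s) s := by
  have hFanti : StrictAntiOn F (Ioi 0) := strictAntiOn_of_hasDerivWithinAt_neg (convex_Ioi 0)
    (fun u hu => (hFd u hu).continuousAt.continuousWithinAt)
    (fun u hu => by rw [interior_Ioi] at hu ⊢; exact (hFd u hu).hasDerivWithinAt)
    (fun u hu => neg_neg_of_pos (one_div_pos.2 (hfpos u (interior_subset hu))))
  have hσ := hFinv _ hGs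
  have hFinvd := (hFd _ hσ.1).of_invOn_of_strictAntiOn hFanti hFpos (fun σ hσ => (hFinv σ hσ).1)
    ⟨hFinv', fun σ hσ => (hFinv σ hσ).2⟩ (Ioi_mem_nhds hσ.1) (Ioi_mem_nhds hGs)
    (by simp [(hfpos _ hσ.1).ne'])
  refine (hFinvd.comp s hGd).congr_deriv ?_
  field_simp

theorem hasDerivAt_deriv_of_eventually_hasDerivAt_div {f g φ : ℝ → ℝ} {s : ℝ}
    (hφ : ∀ᶠ t in 𝓝 s, HasDerivAt φ (f (φ t) / g t) t) (hf : DifferentiableAt ℝ f (φ s))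
    (hg : DifferentiableAt ℝ g s) (hgs : g s ≠ 0) :
    HasDerivAt (deriv φ) (f (φ s) / g s ^ 2 * (deriv f (φ s) - deriv g s)) s := by
  have hquot := (hf.hasDerivAt.comp s hφ.self_of_nhds).div hg.hasDerivAt hgs
  refine (hquot.congr_of_eventuallyEq (hφ.mono fun t ht => ht.deriv)).congr_deriv ?_
  simp only [Function.comp_apply]
  field_simp

theorem convexOn_of_hasDerivAt_deriv_nonneg {D : Set ℝ} (hD : Convex ℝ D) {f f'' : ℝ → ℝ}
    (hf : ∀ x ∈ D, DifferentiableAt ℝ f x) (hf'' : ∀ x ∈ D, HasDerivAt (deriv f) (f'' x) x)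
    (hf''_nonneg : ∀ x ∈ D, 0 ≤ f'' x) : ConvexOn ℝ D f := by
  refine convexOn_of_deriv2_nonneg' hD (fun x hx => (hf x hx).differentiableWithinAt)
    (fun x hx => (hf'' x hx).differentiableAt.differentiableWithinAt) fun x hx => ?_
  rw [Function.iterate_succ_apply', Function.iterate_one, (hf'' x hx).deriv]
  exact hf''_nonneg x hx

theorem phi_derivatives_and_convexity_general
    (f g F G Finv φ : ℝ → ℝ)
    (hfsm : ContDiffOn ℝ 2 f (Ioi 0)) (hgsm : ContDiffOn ℝ 2 g (Ioi 0))
    (hfpos : ∀ s > (0:ℝ), 0 < f s) (hgpos : ∀ s > (0:ℝ), 0 < g s)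
    (hfint : ∀ s > (0:ℝ), IntegrableOn (fun η => 1 / f η) (Ioi s))
    (hgint : ∀ s > (0:ℝ), IntegrableOn (fun η => 1 / g η) (Ioi s))
    (hF : ∀ s > (0:ℝ), F s = ∫ η in Ioi s, 1 / f η)
    (hG : ∀ s > (0:ℝ), G s = ∫ η in Ioi s, 1 / g η)
    (hFinv : ∀ σ > (0:ℝ), 0 < Finv σ ∧ F (Finv σ) = σ)
    (hFinv' : ∀ u > (0:ℝ), Finv (F u) = u)
    (hφ : ∀ s, φ s = Finv (G s)) :
    (∀ s > (0:ℝ),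
      deriv φ s = f (φ s) / g s ∧
      0 < deriv φ s ∧
      deriv (deriv φ) s
        = f (φ s) / (g s ^ 2 * F (φ s)) * (deriv f (φ s) * F (φ s) - deriv g s * G s)) ∧
    (∀ a b : ℝ, 0 < a →
      (∀ s ∈ Ioo a b, deriv g s * G s ≤ deriv f (φ s) * F (φ s)) →
      ConvexOn ℝ (Ioo a b) φ) := by
  have hFd : ∀ u > (0:ℝ), HasDerivAt F (-(1 / f u)) u := fun u hu =>
    hasDerivAt_of_eqOn_integral_Ioi_one_div hfsm.continuousOn hfpos hfint hF hu
  have hGd : ∀ u > (0:ℝ), HasDerivAt G (-(1 / g u)) u := fun u hu =>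
    hasDerivAt_of_eqOn_integral_Ioi_one_div hgsm.continuousOn hgpos hgint hG hu
  have hFpos : ∀ u > (0:ℝ), 0 < F u := fun u hu => hF u hu ▸
    setIntegral_Ioi_pos (fun x hx => one_div_pos.2 (hfpos x (hu.trans hx))) (hfint u hu)
  have hGpos : ∀ u > (0:ℝ), 0 < G u := fun u hu => hG u hu ▸
    setIntegral_Ioi_pos (fun x hx => one_div_pos.2 (hgpos x (hu.trans hx))) (hgint u hu)
  have hφF : ∀ s > (0:ℝ), 0 < φ s ∧ F (φ s) = G s := fun s hs => hφ s ▸ hFinv _ (hGpos s hs)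
  have hφd : ∀ s > (0:ℝ), HasDerivAt φ (f (φ s) / g s) s := fun s hs => by
    simpa only [show Finv ∘ G = φ from funext fun t => (hφ t).symm, ← hφ] using
      hasDerivAt_inverse_comp hfpos hFd hFpos hFinv hFinv' (hGd s hs) (hGpos s hs)
  have hφd2 : ∀ s > (0:ℝ), HasDerivAt (deriv φ)
      (f (φ s) / (g s ^ 2 * F (φ s)) * (deriv f (φ s) * F (φ s) - deriv g s * G s)) s := by
    intro s hs
    refine (hasDerivAt_deriv_of_eventually_hasDerivAt_div (eventually_of_mem (Ioi_mem_nhds hs) hφd)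
      ((hfsm.differentiableOn two_ne_zero).differentiableAt (Ioi_mem_nhds (hφF s hs).1))
      ((hgsm.differentiableOn two_ne_zero).differentiableAt (Ioi_mem_nhds hs))
      (hgpos s hs).ne').congr_deriv ?_
    rw [(hφF s hs).2]
    field_simp [(hGpos s hs).ne']
  refine ⟨fun s hs => ⟨(hφd s hs).deriv, ?_, (hφd2 s hs).deriv⟩, fun a b ha hab => ?_⟩
  · rw [(hφd s hs).deriv]
    exact div_pos (hfpos _ (hφF s hs).1) (hgpos s hs)
  have hpos : ∀ x ∈ Ioo a b, 0 < x := fun x hx => ha.trans hx.1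
  refine convexOn_of_hasDerivAt_deriv_nonneg (convex_Ioo a b)
    (fun x hx => (hφd x (hpos x hx)).differentiableAt) (fun x hx => hφd2 x (hpos x hx))
    fun x hx => ?_
  have hφx := hφF x (hpos x hx)
  exact mul_nonneg (div_nonneg (hfpos _ hφx.1).le (mul_nonneg (sq_nonneg _) (hFpos _ hφx.1).le))
    (sub_nonneg.2 (hab x hx))

theorem phi_derivatives_and_convexity
    (f g F G Finv φ : ℝ → ℝ)
    (hfsm : ContDiffOn ℝ 2 f (Ioi 0)) (hgsm : ContDiffOn ℝ 2 g (Ioi 0))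
    (hfpos : ∀ s > (0:ℝ), 0 < f s) (hgpos : ∀ s > (0:ℝ), 0 < g s)
    (hf' : ∀ s > (0:ℝ), 0 < deriv f s) (hg' : ∀ s > (0:ℝ), 0 < deriv g s)
    (hfint : ∀ s > (0:ℝ), IntegrableOn (fun η => 1 / f η) (Ioi s))
    (hgint : ∀ s > (0:ℝ), IntegrableOn (fun η => 1 / g η) (Ioi s))
    (hF : ∀ s > (0:ℝ), F s = ∫ η in Ioi s, 1 / f η)
    (hG : ∀ s > (0:ℝ), G s = ∫ η in Ioi s, 1 / g η)
    (hFinv : ∀ σ > (0:ℝ), 0 < Finv σ ∧ F (Finv σ) = σ)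
    (hFinv' : ∀ u > (0:ℝ), Finv (F u) = u)
    (hφ : ∀ s, φ s = Finv (G s)) :
    (∀ s > (0:ℝ),
      deriv φ s = f (φ s) / g s ∧
      0 < deriv φ s ∧
      deriv (deriv φ) s
        = f (φ s) / (g s ^ 2 * F (φ s)) * (deriv f (φ s) * F (φ s) - deriv g s * G s)) ∧
    (∀ a b : ℝ, 0 < a →
      (∀ s ∈ Ioo a b, deriv g s * G s ≤ deriv f (φ s) * F (φ s)) →
      ConvexOn ℝ (Ioo a b) φ) :=
  phi_derivatives_and_convexity_general f g F G Finv φ hfsm hgsm hfpos hgpos hfint hgint hF hG hFinv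
    hFinv' hφ
end
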